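/- Let Ω ⊂ ℂᵐ be a bounded domain, ψ : 𝔹^q → ℂᵐ holomorphic with ψ'(0) injective and x + tv + ψ(ε𝔹^q) ⊂ Ω for all t ∈ (0,δ], where x = ψ(0) ∈ ∂Ω and v is a unit vector. Let ζₙ = x + tₙ v with tₙ ↓ 0, and let Φₙ : 𝔹ᵐ → Ω be holomorphic embeddings with Φₙ(0) = ζₙ such that Φₙ'(0) preserves the subspace ℂ^q × {0} = ψ'(0)ℂ^q, and suppose k_Ω(ζₙ; Φₙ'(0)X) ≥ ε₂‖X‖ for all X ∈ ℂᵐ and some ε₂ > 0. Then there exists C > 1 with (1/C)‖X‖ ≤ ‖Φₙ'(0)X‖ ≤ C‖X‖ for all n ≥ 1 and all X ∈ ℂ^q × {0}. -/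

import Mathlib

open Metric Set Complex Filter MeasureTheory
open scoped Manifold Topology ENNReal NNReal
noncomputable section
/-- Euclidean complex m-space. -/
abbrev ESp (m : ℕ) := EuclideanSpace ℂ (Fin m)

instance {m : ℕ} : MeasurableSpace (ESp m) := borel _
instance {m : ℕ} : BorelSpace (ESp m) := ⟨rfl⟩
noncomputable instance {m : ℕ} : MeasureTheory.MeasureSpace (ESp m) :=
  { volume := MeasureTheory.Measure.map (WithLp.equiv 2 (Fin m → ℂ)).symm MeasureTheory.volume }

section Domain
variable {m : ℕ}

/-- The infinitesimal Kobayashi metric of a domain Ω ⊆ ℂ^m. -/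
def kobD (Ω : Set (ESp m)) (z X : ESp m) : ℝ :=
  sInf { c : ℝ | ∃ (ξ : ℂ) (g : ℂ → ESp m), DifferentiableOn ℂ g (ball 0 1) ∧
    MapsTo g (ball 0 1) Ω ∧ g 0 = z ∧ ξ • deriv g 0 = X ∧ c = ‖ξ‖ }

end Domain



/-!
The upper bound is the Schwarz–Cauchy estimate `‖Φₙ'(0)‖ ≤ diam Ω` for holomorphic maps of the
unit ball into `Ω`. For the lower bound, `Φₙ'(0)` preserves `S = ψ'(0)ℂ^q`, so
`Φₙ'(0)X = ψ'(0)w` with `‖w‖ ≤ K‖Φₙ'(0)X‖` for a fixed `K`, as `ψ'(0)` is injective. Restricting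
`u ↦ tₙv + ψ(u)` to the complex line through `w` gives a disk in `Ω` through `ζₙ` with derivative a
fixed multiple of `ψ'(0)w`, so `k_Ω(ζₙ; Φₙ'(0)X) ≲ ‖w‖`, while by hypothesis it is `≥ ε₂‖X‖`.
-/

section Kobayashi
variable {m : ℕ} {Ω : Set (ESp m)}

theorem kobD_le_of_mapsTo {g : ℂ → ESp m} (hg : DifferentiableOn ℂ g (ball 0 1))
    (hmaps : MapsTo g (ball 0 1) Ω) (ξ : ℂ) : kobD Ω (g 0) (ξ • deriv g 0) ≤ ‖ξ‖ :=
  csInf_le ⟨0, by rintro c ⟨ξ, g, -, -, -, -, rfl⟩; exact norm_nonneg ξ⟩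
    ⟨ξ, g, hg, hmaps, rfl, rfl, rfl⟩

theorem kobD_fderiv_le_of_mapsTo_ball {E : Type*} [NormedAddCommGroup E] [NormedSpace ℂ E]
    {F : E → ESp m} {ρ : ℝ} (hρ : 0 < ρ) (hF : DifferentiableOn ℂ F (ball 0 ρ))
    (hmaps : MapsTo F (ball 0 ρ) Ω) (w : E) :
    kobD Ω (F 0) (fderiv ℂ F 0 w) ≤ ‖w‖ / ρ := by
  set u : E := ((ρ / ‖w‖ : ℝ) : ℂ) • w
  have hu : ‖u‖ ≤ ρ := by
    rw [norm_smul, Complex.norm_real, Real.norm_of_nonneg (by positivity)]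
    rcases eq_or_ne w 0 with rfl | hw
    · simpa using hρ.le
    · rw [div_mul_cancel₀ _ (norm_ne_zero_iff.2 hw)]
  have hline : MapsTo (fun τ : ℂ => τ • u) (ball 0 1) (ball 0 ρ) := fun τ hτ => by
    rw [mem_ball_zero_iff] at hτ ⊢
    rw [norm_smul]
    nlinarith [norm_nonneg τ, norm_nonneg u]
  have hdiff : DifferentiableOn ℂ (fun τ : ℂ => F (τ • u)) (ball 0 1) :=
    hF.comp (differentiableOn_id.smul_const u) hline
  have hderiv : deriv (fun τ : ℂ => F (τ • u)) 0 = fderiv ℂ F 0 u := by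
    have hF0 : HasFDerivAt F (fderiv ℂ F 0) ((0 : ℂ) • u) := by
      rw [zero_smul]
      exact (hF.differentiableAt (ball_mem_nhds 0 hρ)).hasFDerivAt
    simpa [Function.comp_def] using
      (hF0.comp_hasDerivAt 0 ((hasDerivAt_id (0 : ℂ)).smul_const u)).deriv
  have hscale : ((‖w‖ / ρ : ℝ) : ℂ) • u = w := by
    rcases eq_or_ne w 0 with rfl | hw
    · simp [u]
    · have hw' : ‖w‖ ≠ 0 := norm_ne_zero_iff.2 hw
      rw [smul_smul, ← Complex.ofReal_mul, show ‖w‖ / ρ * (ρ / ‖w‖) = 1 by field_simp,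
        Complex.ofReal_one, one_smul]
  have key := kobD_le_of_mapsTo hdiff (hmaps.comp hline) ((‖w‖ / ρ : ℝ) : ℂ)
  rwa [hderiv, ← map_smul, hscale, zero_smul, Complex.norm_real,
    Real.norm_of_nonneg (by positivity)] at key

/-- The radius is `min ε 1` rather than `ε` because `ψ` is only holomorphic on `ball 0 1`. -/
theorem kobD_fderiv_le_of_disk {q : ℕ} {ψ : ESp q → ESp m}
    (hψ : DifferentiableOn ℂ ψ (ball 0 1)) {p : ESp m} {ε : ℝ} (hε : 0 < ε)
    (hdisk : ∀ u ∈ ball (0 : ESp q) 1, p + ψ (ε • u) ∈ Ω) (w : ESp q) :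
    kobD Ω (p + ψ 0) (fderiv ℂ ψ 0 w) ≤ ‖w‖ / min ε 1 := by
  have hρ : 0 < min ε 1 := lt_min hε one_pos
  have hsub : ball (0 : ESp q) (min ε 1) ⊆ ball 0 1 := ball_subset_ball (min_le_right ε 1)
  have hmaps : MapsTo (fun u => p + ψ u) (ball 0 (min ε 1)) Ω := fun u hu => by
    have hu' : ε⁻¹ • u ∈ ball (0 : ESp q) 1 := by
      rw [mem_ball_zero_iff, norm_smul, Real.norm_of_nonneg (inv_nonneg.2 hε.le),
        inv_mul_lt_iff₀ hε, mul_one]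
      exact (mem_ball_zero_iff.1 hu).trans_le (min_le_left ε 1)
    simpa [smul_smul, hε.ne'] using hdisk _ hu'
  have key := kobD_fderiv_le_of_mapsTo_ball hρ ((hψ.mono hsub).const_add p) hmaps w
  rwa [fderiv_const_add] at key

theorem kobD_le_mul_norm_of_mem_range {q : ℕ} {ψ : ESp q → ESp m}
    (hψ : DifferentiableOn ℂ ψ (ball 0 1)) {p : ESp m} {ε : ℝ} (hε : 0 < ε)
    (hdisk : ∀ u ∈ ball (0 : ESp q) 1, p + ψ (ε • u) ∈ Ω) {K : ℝ≥0}
    (hK : AntilipschitzWith K (fderiv ℂ ψ 0)) {Y : ESp m} (hY : Y ∈ range (fderiv ℂ ψ 0)) :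
    kobD Ω (p + ψ 0) Y ≤ K / min ε 1 * ‖Y‖ := by
  obtain ⟨w, rfl⟩ := hY
  have hρ : 0 < min ε 1 := lt_min hε one_pos
  have hwK : ‖w‖ ≤ K * ‖fderiv ℂ ψ 0 w‖ := by simpa using hK.le_mul_dist w 0
  calc kobD Ω (p + ψ 0) (fderiv ℂ ψ 0 w) ≤ ‖w‖ / min ε 1 := kobD_fderiv_le_of_disk hψ hε hdisk w
    _ ≤ K * ‖fderiv ℂ ψ 0 w‖ / min ε 1 := by gcongr
    _ = K / min ε 1 * ‖fderiv ℂ ψ 0 w‖ := by ring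

end Kobayashi

theorem norm_fderiv_le_diam_div_of_mapsTo_ball {E F : Type*} [NormedAddCommGroup E]
    [NormedSpace ℂ E] [NormedAddCommGroup F] [NormedSpace ℂ F] {f : E → F} {Ω : Set F}
    {c : E} {R : ℝ} (hΩ : Bornology.IsBounded Ω) (hR : 0 < R)
    (hf : DifferentiableOn ℂ f (ball c R)) (hmaps : MapsTo f (ball c R) Ω) :
    ‖fderiv ℂ f c‖ ≤ diam Ω / R := by
  have hc : f c ∈ Ω := hmaps (mem_ball_self hR)
  refine Complex.norm_fderiv_le_div_of_mapsTo_ball hf (fun z hz => ?_) hR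
  exact mem_closedBall.2 (dist_le_diam_of_mem hΩ (hmaps hz) hc)

theorem stmt19_general (m q : ℕ) (Ω : Set (ESp m))
    (hΩbd : Bornology.IsBounded Ω)
    (S : Set (ESp m))
    (ψ : ESp q → ESp m) (hψ : DifferentiableOn ℂ ψ (ball 0 1))
    (hψ' : Function.Injective (fderiv ℂ ψ 0)) (hrange : range (fderiv ℂ ψ 0) = S)
    (x : ESp m) (hx : x = ψ 0)
    (v : ESp m) (ε δ : ℝ) (hε : 0 < ε)
    (hdisk : ∀ t ∈ Ioc (0:ℝ) δ, ∀ u ∈ ball (0 : ESp q) 1, t • v + ψ (ε • u) ∈ Ω)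
    (t : ℕ → ℝ) (ht : ∀ n, t n ∈ Ioc (0:ℝ) δ)
    (ζ : ℕ → ESp m) (hζ : ∀ n, ζ n = x + t n • v)
    (Φ : ℕ → ESp m → ESp m)
    (hΦholo : ∀ n, DifferentiableOn ℂ (Φ n) (ball 0 1))
    (hΦmaps : ∀ n, MapsTo (Φ n) (ball (0 : ESp m) 1) Ω)
    (hΦpres : ∀ n, (fderiv ℂ (Φ n) 0) '' S = S)
    (ε₂ : ℝ) (hε₂ : 0 < ε₂)
    (hkob : ∀ n, ∀ X : ESp m, ε₂ * ‖X‖ ≤ kobD Ω (ζ n) (fderiv ℂ (Φ n) 0 X)) :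
    ∃ C > (1:ℝ), ∀ n, ∀ X ∈ S,
      (1 / C) * ‖X‖ ≤ ‖fderiv ℂ (Φ n) 0 X‖ ∧ ‖fderiv ℂ (Φ n) 0 X‖ ≤ C * ‖X‖ := by
  obtain ⟨K, -, hK⟩ := (fderiv ℂ ψ 0).toLinearMap.exists_antilipschitzWith
    (LinearMap.ker_eq_bot.mpr hψ')
  set a := K / min ε 1 / ε₂
  have hupper : ∀ n X, ‖fderiv ℂ (Φ n) 0 X‖ ≤ diam Ω * ‖X‖ := fun n X =>
    (ContinuousLinearMap.le_opNorm _ X).trans <| by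
      gcongr
      simpa using norm_fderiv_le_diam_div_of_mapsTo_ball hΩbd one_pos (hΦholo n) (hΦmaps n)
  have hlower : ∀ n, ∀ X ∈ S, ‖X‖ ≤ a * ‖fderiv ℂ (Φ n) 0 X‖ := by
    intro n X hX
    have hY : fderiv ℂ (Φ n) 0 X ∈ range (fderiv ℂ ψ 0) :=
      hrange ▸ hΦpres n ▸ mem_image_of_mem _ hX
    have hkd := kobD_le_mul_norm_of_mem_range hψ hε (hdisk (t n) (ht n)) hK hY
    rw [show t n • v + ψ 0 = ζ n by rw [hζ n, hx, add_comm]] at hkd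
    rw [show a * ‖fderiv ℂ (Φ n) 0 X‖ = K / min ε 1 * ‖fderiv ℂ (Φ n) 0 X‖ / ε₂ by ring,
      le_div_iff₀ hε₂, mul_comm]
    exact (hkob n X).trans hkd
  set C := max (max (diam Ω) a) 2
  have hC : 1 < C := one_lt_two.trans_le (le_max_right _ _)
  refine ⟨C, hC, fun n X hX => ⟨?_, ?_⟩⟩
  · rw [one_div_mul_eq_div, div_le_iff₀ (one_pos.trans hC), mul_comm]
    exact (hlower n X hX).trans (by gcongr; exact le_max_of_le_left (le_max_right _ _))
  · exact (hupper n X).trans (by gcongr; exact le_max_of_le_left (le_max_left _ _))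

/-- Uniform two-sided bounds on Φₙ'(0) along the tangential directions of an analytic disk in
the boundary. -/
theorem stmt19 (m q : ℕ) (hqm : q ≤ m) (Ω : Set (ESp m)) (hΩop : IsOpen Ω)
    (hΩbd : Bornology.IsBounded Ω) (hΩne : Ω.Nonempty)
    (S : Set (ESp m)) (hS : S = {X : ESp m | ∀ i : Fin m, q ≤ (i : ℕ) → X i = 0})
    (ψ : ESp q → ESp m) (hψ : DifferentiableOn ℂ ψ (ball 0 1))
    (hψ' : Function.Injective (fderiv ℂ ψ 0)) (hrange : range (fderiv ℂ ψ 0) = S)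
    (x : ESp m) (hx : x = ψ 0) (hxbd : x ∈ frontier Ω)
    (v : ESp m) (hv : ‖v‖ = 1) (ε δ : ℝ) (hε : 0 < ε) (hδ : 0 < δ)
    (hdisk : ∀ t ∈ Ioc (0:ℝ) δ, ∀ u ∈ ball (0 : ESp q) 1, t • v + ψ (ε • u) ∈ Ω)
    (t : ℕ → ℝ) (ht : ∀ n, t n ∈ Ioc (0:ℝ) δ) (htanti : Antitone t)
    (htlim : Filter.Tendsto t atTop (𝓝 (0:ℝ)))
    (ζ : ℕ → ESp m) (hζ : ∀ n, ζ n = x + t n • v)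
    (Φ : ℕ → ESp m → ESp m)
    (hΦholo : ∀ n, DifferentiableOn ℂ (Φ n) (ball 0 1))
    (hΦmaps : ∀ n, MapsTo (Φ n) (ball (0 : ESp m) 1) Ω)
    (hΦinj : ∀ n, InjOn (Φ n) (ball (0 : ESp m) 1))
    (hΦ0 : ∀ n, Φ n 0 = ζ n)
    (hΦpres : ∀ n, (fderiv ℂ (Φ n) 0) '' S = S)
    (ε₂ : ℝ) (hε₂ : 0 < ε₂)
    (hkob : ∀ n, ∀ X : ESp m, ε₂ * ‖X‖ ≤ kobD Ω (ζ n) (fderiv ℂ (Φ n) 0 X)) :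
    ∃ C > (1:ℝ), ∀ n, ∀ X ∈ S,
      (1 / C) * ‖X‖ ≤ ‖fderiv ℂ (Φ n) 0 X‖ ∧ ‖fderiv ℂ (Φ n) 0 X‖ ≤ C * ‖X‖ :=
  stmt19_general m q Ω hΩbd S ψ hψ hψ' hrange x hx v ε δ hε hdisk t ht ζ hζ Φ hΦholo hΦmaps hΦpres
    ε₂ hε₂ hkob
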